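/- arXiv:1304.6962 — 9 statements merged into one kernel-verified Lean document; each statement's English description precedes it below -/
import Mathlib

section
/- Let 𝔽 = ℝ and let 0 ≤ d ≤ n_min be even. Then P^gcd_d = P^cd_d; that is, an N-tuple of real polynomials p = (p^(1), …, p^(N)) with p^(k) ∈ P_{n_k} lies in P^cd_{d'} for some d ≤ d' ≤ n_min if and only if there exist a nonzero h ∈ P_d and cofactors g^(k) ∈ P_{n_k − d} with p^(k) = g^(k)·h for all k. -/
open Polynomial

/-- `p` has a common divisor of degree (at least) `d` with cofactors respecting the degree
bounds `n`: there is a nonzero `h ∈ P_d` and cofactors `g k ∈ P_{n k - d}` with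
`p k = g k * h`. -/
def Pcd {F : Type*} [Field F] {N : ℕ} (n : Fin N → ℕ) (d : ℕ) (p : Fin N → F[X]) : Prop :=
  ∃ h : F[X], h ≠ 0 ∧ h.natDegree ≤ d ∧
    ∃ g : Fin N → F[X], (∀ k, (g k).natDegree ≤ n k - d) ∧ ∀ k, p k = g k * h

/-- `p` has GCD of degree at least `d`: it lies in `P^cd_{d'}` for some `d ≤ d' ≤ n_min`. -/
def Pgcd {F : Type*} [Field F] {N : ℕ} (n : Fin N → ℕ) (d : ℕ) (p : Fin N → F[X]) : Prop :=
  ∃ d', d ≤ d' ∧ d' ≤ (⨅ k, n k) ∧ Pcd n d' p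

/-- Every real polynomial of degree at least 2 has a divisor of degree exactly 2. -/
lemma exists_quadratic_divisor (h : ℝ[X]) (h0 : h ≠ 0) (h2 : 2 ≤ h.natDegree) :
    ∃ r : ℝ[X], r ∣ h ∧ r ≠ 0 ∧ r.natDegree = 2 := by
  have hnu : ¬ IsUnit h := fun hu => by
    simp [Polynomial.natDegree_eq_zero_of_isUnit hu] at h2
  obtain ⟨q, hqirr, hqdvd⟩ := WfDvdMonoid.exists_irreducible_factor hnu h0
  have hq0 : q ≠ 0 := hqirr.ne_zero
  have hqle : q.natDegree ≤ 2 := hqirr.natDegree_le_two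
  have hqpos : 0 < q.natDegree := hqirr.natDegree_pos
  interval_cases hdeg : q.natDegree
  · -- q linear; look inside h / q
    obtain ⟨t, rfl⟩ := hqdvd
    have ht0 : t ≠ 0 := right_ne_zero_of_mul h0
    have htdeg : 1 ≤ t.natDegree := by
      have := Polynomial.natDegree_mul hq0 ht0
      omega
    have htnu : ¬ IsUnit t := fun hu => by
      simp [Polynomial.natDegree_eq_zero_of_isUnit hu] at htdeg
    obtain ⟨q', hq'irr, hq'dvd⟩ := WfDvdMonoid.exists_irreducible_factor htnu ht0
    have hq'0 : q' ≠ 0 := hq'irr.ne_zero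
    have hq'le : q'.natDegree ≤ 2 := hq'irr.natDegree_le_two
    have hq'pos : 0 < q'.natDegree := hq'irr.natDegree_pos
    interval_cases hdeg' : q'.natDegree
    · refine ⟨q * q', mul_dvd_mul_left q hq'dvd, mul_ne_zero hq0 hq'0, ?_⟩
      rw [Polynomial.natDegree_mul hq0 hq'0, hdeg, hdeg']
    · exact ⟨q', hq'dvd.mul_left q, hq'0, hdeg'⟩
  · exact ⟨q, hqdvd, hq0, hdeg⟩

/-- A nonzero real polynomial of degree at least `d`, `d` even, splits off a factor of
degree exactly `d`. -/
lemma exists_factor_of_even_natDegree (d : ℕ) (hdeven : Even d) :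
    ∀ h : ℝ[X], h ≠ 0 → d ≤ h.natDegree →
      ∃ h₁ h₂ : ℝ[X], h = h₁ * h₂ ∧ h₂.natDegree = d := by
  induction d using Nat.strong_induction_on with
  | _ d ih =>
    intro h h0 hdle
    rcases Nat.eq_zero_or_pos d with rfl | hdpos
    · exact ⟨h, 1, (mul_one h).symm, Polynomial.natDegree_one⟩
    · obtain ⟨d'', rfl⟩ : ∃ d'', d = d'' + 2 := by
        rcases hdeven with ⟨m, hm⟩; exact ⟨d - 2, by omega⟩
      obtain ⟨r, ⟨t, rfl⟩, hr0, hrdeg⟩ := exists_quadratic_divisor h h0 (by omega)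
      have ht0 : t ≠ 0 := right_ne_zero_of_mul h0
      have htdeg : d'' ≤ t.natDegree := by
        have := Polynomial.natDegree_mul hr0 ht0
        omega
      obtain ⟨t₁, t₂, rfl, ht₂deg⟩ := ih d'' (by omega) (by
        rcases hdeven with ⟨m, hm⟩; exact ⟨m - 1, by omega⟩) t ht0 htdeg
      have ht₂0 : t₂ ≠ 0 := right_ne_zero_of_mul ht0
      refine ⟨t₁, r * t₂, by ring, ?_⟩
      rw [Polynomial.natDegree_mul hr0 ht₂0, hrdeg, ht₂deg]; ring

/-- Over `ℝ`, for every even `0 ≤ d ≤ n_min` the sets `P^gcd_d` and `P^cd_d` coincide. -/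
theorem real_Pgcd_eq_Pcd_of_even (N : ℕ) (n : Fin (N + 1) → ℕ) (d : ℕ)
    (hd : d ≤ ⨅ k, n k) (hdeven : Even d)
    (p : Fin (N + 1) → ℝ[X]) (hp : ∀ k, (p k).natDegree ≤ n k) :
    Pgcd n d p ↔ Pcd n d p := by
  constructor
  · rintro ⟨d', hdd', hd'le, h, h0, hhdeg, g, hg, hpg⟩
    have hd'nk : ∀ k, d' ≤ n k := fun k =>
      hd'le.trans (ciInf_le (OrderBot.bddBelow _) k)
    by_cases hcase : h.natDegree ≤ d
    · exact ⟨h, h0, hcase, g, fun k => le_trans (hg k) (by have := hd'nk k; omega),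
        hpg⟩
    · push_neg at hcase
      obtain ⟨h₁, h₂, rfl, hh₂deg⟩ :=
        exists_factor_of_even_natDegree d hdeven h h0 hcase.le
      have h₁0 : h₁ ≠ 0 := left_ne_zero_of_mul h0
      have h₂0 : h₂ ≠ 0 := right_ne_zero_of_mul h0
      have hmul := Polynomial.natDegree_mul h₁0 h₂0
      refine ⟨h₂, h₂0, hh₂deg.le, fun k => g k * h₁, fun k => ?_, fun k => by
        rw [hpg k]; ring⟩
      show (g k * h₁).natDegree ≤ n k - d
      have h1 := Polynomial.natDegree_mul_le (p := g k) (q := h₁)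
      have h2 := hg k
      have h3 := hd'nk k
      omega
  · intro hcd
    exact ⟨d, le_refl d, hd, hcd⟩
end

section
/- Let 𝔽 = ℝ and let 0 ≤ d ≤ n_min be odd. Then P^gcd_d = P^cd_d ∪ P^cd_{d+1}, where P^cd_{d+1} is taken to be empty if d + 1 > n_min; that is, an N-tuple of real polynomials has a common divisor of degree at least d if and only if it has a common divisor h ∈ P_d with cofactors in P_{n_k − d}, or a common divisor h ∈ P_{d+1} with cofactors in P_{n_k − d − 1}. -/
open Polynomial

lemma exists_factor_deg (e : ℕ) : ∀ (h : ℝ[X]), h ≠ 0 → h.natDegree = e →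
    ∀ m ≤ e, ∃ h1 : ℝ[X], h1 ∣ h ∧ h1 ≠ 0 ∧ (h1.natDegree = m ∨ h1.natDegree = m + 1) := by
  induction e using Nat.strong_induction_on with
  | _ e ih =>
    intro h hh he m hm
    rcases Nat.eq_zero_or_pos m with rfl | hm0
    · exact ⟨1, one_dvd _, one_ne_zero, Or.inl natDegree_one⟩
    have hnu : ¬ IsUnit h := by
      intro hu
      have := natDegree_eq_zero_of_isUnit hu
      omega
    obtain ⟨q, hqirr, hqdvd⟩ := WfDvdMonoid.exists_irreducible_factor hnu hh
    obtain ⟨h', rfl⟩ := hqdvd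
    have hq0 : q ≠ 0 := hqirr.ne_zero
    have hh'0 : h' ≠ 0 := right_ne_zero_of_mul hh
    have hdeg : q.natDegree + h'.natDegree = e := by
      rw [← he, natDegree_mul hq0 hh'0]
    have hq2 : q.natDegree ≤ 2 := hqirr.natDegree_le_two
    have hq1 : 1 ≤ q.natDegree := hqirr.natDegree_pos
    by_cases hcase : q.natDegree ≤ m
    · obtain ⟨h1', hdvd', h1'0, hdeg'⟩ :=
        ih h'.natDegree (by omega) h' hh'0 rfl (m - q.natDegree) (by omega)
      refine ⟨q * h1', mul_dvd_mul_left q hdvd', mul_ne_zero hq0 h1'0, ?_⟩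
      rw [natDegree_mul hq0 h1'0]
      omega
    · -- m < q.natDegree ≤ 2, m ≥ 1, so m = 1, q.natDegree = 2
      refine ⟨q, dvd_mul_right q h', hq0, Or.inr ?_⟩
      omega

/-- Over `ℝ`, for every odd `0 ≤ d ≤ n_min` one has `P^gcd_d = P^cd_d ∪ P^cd_{d+1}`,
where `P^cd_{d+1}` is taken to be empty when `d + 1 > n_min`. -/
theorem real_Pgcd_eq_Pcd_union_of_odd (N : ℕ) (n : Fin (N + 1) → ℕ) (d : ℕ)
    (hd : d ≤ ⨅ k, n k) (hdodd : Odd d)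
    (p : Fin (N + 1) → ℝ[X]) (hp : ∀ k, (p k).natDegree ≤ n k) :
    Pgcd n d p ↔ (Pcd n d p ∨ (d + 1 ≤ (⨅ k, n k) ∧ Pcd n (d + 1) p)) := by
  have hinf : ∀ k, (⨅ k, n k) ≤ n k := fun k => ciInf_le (OrderBot.bddBelow _) k
  constructor
  · rintro ⟨d', hdd', hd'i, h, hh0, hhdeg, g, hgdeg, hpg⟩
    by_cases hcase : h.natDegree ≤ d
    · exact Or.inl ⟨h, hh0, hcase, g,
        fun k => le_trans (hgdeg k) (Nat.sub_le_sub_left hdd' _), hpg⟩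
    · push_neg at hcase
      obtain ⟨h1, hdvd, h10, hm⟩ := exists_factor_deg h.natDegree h hh0 rfl d (by omega)
      obtain ⟨c, hc⟩ := hdvd
      have hc0 : c ≠ 0 := by
        rintro rfl; rw [mul_zero] at hc; exact hh0 hc
      have hsum : h1.natDegree + c.natDegree = h.natDegree := by
        rw [hc, natDegree_mul h10 hc0]
      have hkey : ∀ m, h1.natDegree = m → Pcd n m p := by
        intro m hmeq
        refine ⟨h1, h10, hmeq.le, fun k => g k * c, fun k => ?_, fun k => ?_⟩
        · have h1le : (g k * c).natDegree ≤ (g k).natDegree + c.natDegree :=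
            natDegree_mul_le
          have h2 := hgdeg k
          have h3 := hinf k
          show (g k * c).natDegree ≤ n k - m
          omega
        · rw [hpg k, hc]; ring
      rcases hm with hm | hm
      · exact Or.inl (hkey d hm)
      · exact Or.inr ⟨by omega, hkey (d + 1) hm⟩
  · rintro (hc | ⟨hle, hc⟩)
    · exact ⟨d, le_rfl, hd, hc⟩
    · exact ⟨d + 1, Nat.le_succ d, hle, hc⟩
end

section
/- Let 𝔽 = ℝ. For every 0 ≤ d ≤ n_min, the set P^cd_d, viewed as a subset of the Euclidean space ℝ^{n_1+1} × ⋯ × ℝ^{n_N+1} of coefficient-vector tuples, is a closed set. -/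
open Polynomial Filter Topology

/-- The polynomial with coefficient vector `v` (coefficient of `X^i` is `v i`). -/
noncomputable def toPoly {m : ℕ} (v : Fin m → ℝ) : ℝ[X] :=
  ∑ i, C (v i) * X ^ (i : ℕ)

lemma toPoly_coeff {m : ℕ} (v : Fin m → ℝ) (i : ℕ) :
    (toPoly v).coeff i = if h : i < m then v ⟨i, h⟩ else 0 := by
  simp only [toPoly, Polynomial.finset_sum_coeff, Polynomial.coeff_C_mul,
    Polynomial.coeff_X_pow, mul_ite, mul_one, mul_zero]
  split_ifs with h
  · rw [Finset.sum_eq_single (⟨i, h⟩ : Fin m)]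
    · simp
    · intro b _ hb
      simp only [ite_eq_right_iff]
      intro hib
      exact absurd (Fin.ext hib.symm) hb
    · simp
  · apply Finset.sum_eq_zero
    intro b _
    simp only [ite_eq_right_iff]
    intro hib
    exact absurd (hib ▸ b.isLt) h

lemma toPoly_smul {m : ℕ} (c : ℝ) (v : Fin m → ℝ) :
    toPoly (c • v) = C c * toPoly v := by
  simp [toPoly, Finset.mul_sum, C_mul, mul_assoc]

lemma toPoly_eq_zero {m : ℕ} {v : Fin m → ℝ} (h : toPoly v = 0) : v = 0 := by
  funext j
  have := congrArg (fun q => Polynomial.coeff q (j : ℕ)) h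
  simpa [toPoly_coeff, j.isLt] using this

lemma continuous_toPoly_coeff {m : ℕ} (i : ℕ) :
    Continuous fun v : Fin m → ℝ => (toPoly v).coeff i := by
  simp only [toPoly_coeff]
  rcases Nat.lt_or_ge i m with h | h
  · simp only [dif_pos h]
    exact continuous_apply _
  · simp only [dif_neg (Nat.not_lt.mpr h)]
    exact continuous_const

lemma tendsto_toPoly_coeff {m : ℕ} {u : ℕ → Fin m → ℝ} {v : Fin m → ℝ}
    (h : Filter.Tendsto u Filter.atTop (nhds v)) (i : ℕ) :
    Filter.Tendsto (fun j => (toPoly (u j)).coeff i) Filter.atTop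
      (nhds ((toPoly v).coeff i)) := by
  simp only [toPoly_coeff]
  rcases Nat.lt_or_ge i m with hi | hi
  · simp only [dif_pos hi]
    exact (((continuous_apply (⟨i, hi⟩ : Fin m)).tendsto v).comp h)
  · simp only [dif_neg (Nat.not_lt.mpr hi)]
    exact tendsto_const_nhds

set_option maxHeartbeats 1000000 in
/-- Over `ℝ`, for every `0 ≤ d ≤ n_min`, the set `P^cd_d` of `N`-tuples of real polynomials
(given by coefficient vectors) having a common divisor `h ∈ P_d \ {0}` with cofactors
`g k ∈ P_{n k - d}`, viewed as a subset of `ℝ^{n_1+1} × ⋯ × ℝ^{n_N+1}`, is closed. -/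
theorem isClosed_Pcd (N : ℕ) (n : Fin (N + 1) → ℕ) (d : ℕ) (hd : d ≤ ⨅ k, n k) :
    IsClosed {p : (k : Fin (N + 1)) → Fin (n k + 1) → ℝ |
      ∃ h : Fin (d + 1) → ℝ, h ≠ 0 ∧
        ∃ g : (k : Fin (N + 1)) → Fin (n k - d + 1) → ℝ,
          ∀ k, toPoly (p k) = toPoly (g k) * toPoly h} := by
  rw [← isSeqClosed_iff_isClosed]
  intro P p hP hlim
  choose h hne g hg using hP
  have hnrm_pos : ∀ j, (0 : ℝ) < ‖h j‖ := fun j => norm_pos_iff.mpr (hne j)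
  set h' : ℕ → Fin (d + 1) → ℝ := fun j => ‖h j‖⁻¹ • h j with hh'def
  set g' : ℕ → (k : Fin (N + 1)) → Fin (n k - d + 1) → ℝ :=
    fun j k => ‖h j‖ • g j k with hg'def
  have hh'norm : ∀ j, ‖h' j‖ = 1 := by
    intro j
    rw [hh'def]
    simp only [norm_smul, norm_inv, norm_norm]
    exact inv_mul_cancel₀ (hnrm_pos j).ne'
  have hfac : ∀ j k, toPoly (P j k) = toPoly (g' j k) * toPoly (h' j) := by
    intro j k
    rw [hg'def, hh'def]
    simp only
    rw [toPoly_smul, toPoly_smul, mul_mul_mul_comm, ← C_mul,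
      mul_inv_cancel₀ (hnrm_pos j).ne', C_1, one_mul]
    exact hg j k
  set r : ℕ → ℝ := fun j => ‖g' j‖ with hrdef
  have hr_nonneg : ∀ j, 0 ≤ r j := fun j => norm_nonneg _
  set a : ℕ → ℝ := fun j => (1 + r j)⁻¹ with hadef
  have h1r_pos : ∀ j, (0 : ℝ) < 1 + r j := fun j => by linarith [hr_nonneg j]
  have ha_pos : ∀ j, 0 < a j := fun j => inv_pos.mpr (h1r_pos j)
  have ha_le : ∀ j, a j ≤ 1 := by
    intro j
    rw [hadef]
    simp only
    rw [inv_le_one_iff₀]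
    right; linarith [hr_nonneg j]
  set G' : ℕ → (k : Fin (N + 1)) → Fin (n k - d + 1) → ℝ :=
    fun j => a j • g' j with hG'def
  have hG'norm : ∀ j, ‖G' j‖ = 1 - a j := by
    intro j
    rw [hG'def]
    simp only [norm_smul, Real.norm_eq_abs, abs_of_pos (ha_pos j)]
    have h1 : a j * (1 + r j) = 1 := inv_mul_cancel₀ (h1r_pos j).ne'
    have h2 : ‖g' j‖ = r j := rfl
    rw [h2]
    nlinarith [h1]
  set X := (Fin (d + 1) → ℝ) × ((k : Fin (N + 1)) → Fin (n k - d + 1) → ℝ) × ℝ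
  set z : ℕ → X := fun j => (h' j, G' j, a j) with hzdef
  have hz_mem : ∀ j, z j ∈ Metric.closedBall (0 : X) 2 := by
    intro j
    rw [Metric.mem_closedBall, dist_zero_right]
    have h1 : ‖z j‖ = max ‖h' j‖ (max ‖G' j‖ ‖a j‖) := rfl
    rw [h1, hh'norm j, hG'norm j]
    have := ha_pos j
    have := ha_le j
    rw [Real.norm_eq_abs, abs_of_pos (ha_pos j)]
    apply max_le (by norm_num)
    apply max_le <;> linarith
  obtain ⟨⟨H, G, A⟩, -, φ, hφ, hzlim⟩ :=
    (isCompact_closedBall (0 : X) 2).tendsto_subseq hz_mem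
  have hH : Tendsto (fun j => h' (φ j)) atTop (𝓝 H) :=
    (continuous_fst.tendsto _).comp hzlim
  have hG : Tendsto (fun j => G' (φ j)) atTop (𝓝 G) :=
    ((continuous_fst.comp continuous_snd).tendsto _).comp hzlim
  have hA : Tendsto (fun j => a (φ j)) atTop (𝓝 A) :=
    ((continuous_snd.comp continuous_snd).tendsto _).comp hzlim
  have hHnorm : ‖H‖ = 1 := by
    have h1 : Tendsto (fun j => ‖h' (φ j)‖) atTop (𝓝 ‖H‖) := hH.norm
    have h2 : (fun j => ‖h' (φ j)‖) = fun _ => (1 : ℝ) := funext fun j => hh'norm (φ j)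
    rw [h2] at h1
    exact tendsto_nhds_unique h1 tendsto_const_nhds
  have hHne : H ≠ 0 := by
    intro hH0
    rw [hH0, norm_zero] at hHnorm
    exact zero_ne_one hHnorm
  have key : ∀ k i, A * (toPoly (p k)).coeff i = (toPoly (G k) * toPoly H).coeff i := by
    intro k i
    have lhs : Tendsto (fun j => a (φ j) * (toPoly (P (φ j) k)).coeff i) atTop
        (𝓝 (A * (toPoly (p k)).coeff i)) := by
      apply hA.mul
      have hcont : Continuous fun q : (k' : Fin (N + 1)) → Fin (n k' + 1) → ℝ =>
          (toPoly (q k)).coeff i :=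
        (continuous_toPoly_coeff i).comp (continuous_apply k)
      exact ((hcont.tendsto p).comp hlim).comp hφ.tendsto_atTop
    have rhs : Tendsto (fun j => (toPoly (G' (φ j) k) * toPoly (h' (φ j))).coeff i) atTop
        (𝓝 ((toPoly (G k) * toPoly H).coeff i)) := by
      have hGk : Tendsto (fun j => G' (φ j) k) atTop (𝓝 (G k)) :=
        ((continuous_apply k).tendsto G).comp hG
      simp only [Polynomial.coeff_mul]
      exact tendsto_finset_sum _ fun x _ =>
        (tendsto_toPoly_coeff hGk x.1).mul (tendsto_toPoly_coeff hH x.2)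
    have heq : ∀ j, a (φ j) * (toPoly (P (φ j) k)).coeff i =
        (toPoly (G' (φ j) k) * toPoly (h' (φ j))).coeff i := by
      intro j
      have hGk : G' (φ j) k = a (φ j) • g' (φ j) k := by
        simp only [hG'def, Pi.smul_apply]
      rw [hGk, toPoly_smul, mul_assoc, coeff_C_mul, ← hfac (φ j) k]
    exact tendsto_nhds_unique (lhs.congr heq) rhs
  have keyP : ∀ k, C A * toPoly (p k) = toPoly (G k) * toPoly H := by
    intro k
    apply Polynomial.ext
    intro i
    rw [coeff_C_mul]
    exact key k i
  have hGnorm : ‖G‖ = 1 - A := by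
    have h1 : Tendsto (fun j => ‖G' (φ j)‖) atTop (𝓝 ‖G‖) := hG.norm
    have h2 : Tendsto (fun j => 1 - a (φ j)) atTop (𝓝 (1 - A)) :=
      tendsto_const_nhds.sub hA
    have h3 : (fun j => ‖G' (φ j)‖) = fun j => 1 - a (φ j) :=
      funext fun j => hG'norm (φ j)
    rw [h3] at h1
    exact tendsto_nhds_unique h1 h2
  by_cases hA0 : A = 0
  · exfalso
    have hG0 : G = 0 := by
      funext k
      have := keyP k
      rw [hA0, C_0, zero_mul] at this
      have hHpoly : toPoly H ≠ 0 := fun hc => hHne (toPoly_eq_zero hc)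
      have : toPoly (G k) = 0 := by
        rcases mul_eq_zero.mp this.symm with h1 | h1
        · exact h1
        · exact absurd h1 hHpoly
      exact toPoly_eq_zero this
    rw [hG0, norm_zero, hA0, sub_zero] at hGnorm
    exact zero_ne_one hGnorm
  · refine ⟨H, hHne, fun k => A⁻¹ • G k, fun k => ?_⟩
    rw [toPoly_smul, mul_assoc, ← keyP k, ← mul_assoc, ← C_mul,
      inv_mul_cancel₀ hA0, C_1, one_mul]
end

section
/- Let K, L, t ≥ 1, k = (k_1, …, k_K) with k_i ≥ 1, and l = (l_1, …, l_L) with l_j ≥ 1. Let P ∈ ℝ^{(k_1+⋯+k_K) × t} be partitioned into row blocks P^(i) ∈ ℝ^{k_i × t} with columns P^(i,j) ∈ ℝ^{k_i} (j = 1, …, t). For a scalar l, let M_{k,l}(P) be the K×t block matrix with (i,j) block M_{l−1}(P^(i,j)) ∈ ℝ^{(k_i+l−1)×l}, and let M_{k,l}(P) = blkdiag(M_{k,l_1}(P), …, M_{k,l_L}(P)). Let c = (c^(i,j))_{i=1..K, j=1..L} with c^(i,j) ∈ ℝ^{k_i + l_j − 1}, ordered block-column-wise as in M_{k,l}(P),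 and let H_{k,l}(c) be the K×L block (mosaic Hankel) matrix with (i,j) block the Hankel matrix H_{k_i, l_j}(c^(i,j)). Then M_{k,l}(P)ᵀ c = 0 if and only if Pᵀ H_{k,l}(c) = 0. -/
open Matrix

/-- The block matrix `M_{k,l}(P) = blkdiag(M_{k,l_1}(P), …, M_{k,l_L}(P))` where, for a
scalar `l`, `M_{k,l}(P)` is the `K × t` block matrix whose `(i,j)` block is the
multiplication matrix `M_{l-1}(P^{(i,j)}) ∈ ℝ^{(k_i + l - 1) × l}`.  Here `k_i = κ i + 1 ≥ 1`
and `l_j = lam j + 1 ≥ 1`, and `P` is given by its row blocks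
`P^{(i)} ∈ ℝ^{k_i × t}` (so `P^{(i,j)} = fun r => P i r j`).  A multiplication-matrix block
for `h ∈ ℝ^{κ i + 1}` has entries `h_{r-c}` (zero when out of range). -/
def multMatBlkdiag (K L t : ℕ) (κ : Fin K → ℕ) (lam : Fin L → ℕ)
    (P : (i : Fin K) → Fin (κ i + 1) → Fin t → ℝ) :
    Matrix ((j : Fin L) × (i : Fin K) × Fin (κ i + lam j + 1))
           ((j : Fin L) × Fin t × Fin (lam j + 1)) ℝ :=
  fun r c =>
    if r.1 = c.1 then
      (if hg : (c.2.2 : ℕ) ≤ (r.2.2 : ℕ) ∧ (r.2.2 : ℕ) - (c.2.2 : ℕ) ≤ κ r.2.1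
       then P r.2.1 ⟨(r.2.2 : ℕ) - (c.2.2 : ℕ), by omega⟩ c.2.1 else 0)
    else 0

/-- The matrix `P ∈ ℝ^{(k_1 + ⋯ + k_K) × t}`, assembled from its blocks. -/
def pMat (K t : ℕ) (κ : Fin K → ℕ) (P : (i : Fin K) → Fin (κ i + 1) → Fin t → ℝ) :
    Matrix ((i : Fin K) × Fin (κ i + 1)) (Fin t) ℝ :=
  fun r s => P r.1 r.2 s

/-- The mosaic Hankel matrix `H_{k,l}(c)`: the `K × L` block matrix whose `(i,j)` block is
the Hankel matrix `H_{k_i, l_j}(c^{(i,j)})`, where `c^{(i,j)} ∈ ℝ^{k_i + l_j - 1}`. -/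
def mosaicHankel (K L : ℕ) (κ : Fin K → ℕ) (lam : Fin L → ℕ)
    (c : (j : Fin L) → (i : Fin K) → Fin (κ i + lam j + 1) → ℝ) :
    Matrix ((i : Fin K) × Fin (κ i + 1)) ((j : Fin L) × Fin (lam j + 1)) ℝ :=
  fun r q => c q.1 r.1 ⟨(r.2 : ℕ) + (q.2 : ℕ), by omega⟩

theorem keyAux (K L t : ℕ)
    (κ : Fin K → ℕ) (lam : Fin L → ℕ)
    (P : (i : Fin K) → Fin (κ i + 1) → Fin t → ℝ)
    (c : (j : Fin L) → (i : Fin K) → Fin (κ i + lam j + 1) → ℝ)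
    (j : Fin L) (s : Fin t) (q : Fin (lam j + 1)) :
    (multMatBlkdiag K L t κ lam P)ᵀ.mulVec (fun r => c r.1 r.2.1 r.2.2) ⟨j, s, q⟩ =
      ∑ x : (i : Fin K) × Fin (κ i + 1), P x.1 x.2 s * c j x.1 ⟨(x.2 : ℕ) + q, by omega⟩ := by
  rw [Matrix.mulVec]
  simp only [dotProduct, Matrix.transpose_apply, multMatBlkdiag]
  rw [← Finset.univ_sigma_univ, Finset.sum_sigma]
  rw [Finset.sum_eq_single j]
  · simp only [if_pos rfl]
    conv_lhs => rw [← Finset.univ_sigma_univ]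
    rw [Finset.sum_sigma]
    conv_rhs => rw [← Finset.univ_sigma_univ]
    rw [Finset.sum_sigma]
    refine Finset.sum_congr rfl fun i _ => ?_
    have he : Function.Injective (fun p : Fin (κ i + 1) =>
        (⟨(p : ℕ) + q, by omega⟩ : Fin (κ i + lam j + 1))) := by
      intro a b h
      have := congrArg Fin.val h
      simp only at this
      exact Fin.ext (by omega)
    simp only [if_true]
    set e : Fin (κ i + 1) ↪ Fin (κ i + lam j + 1) := ⟨_, he⟩ with hedef
    have hv : ∀ a ∈ (Finset.univ : Finset (Fin (κ i + lam j + 1))),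
        a ∉ Finset.univ.map e →
        (if h : (q : ℕ) ≤ (a : ℕ) ∧ (a : ℕ) - (q : ℕ) ≤ κ i
         then P i ⟨(a : ℕ) - (q : ℕ), by omega⟩ s else 0) * c j i a = 0 := by
      intro a _ ha
      rw [dif_neg]
      · ring
      · intro hcond
        exact ha (Finset.mem_map.2 ⟨⟨(a : ℕ) - q, by omega⟩, Finset.mem_univ _,
          Fin.ext (by simp [hedef]; omega)⟩)
    rw [← Finset.sum_subset (Finset.subset_univ (Finset.univ.map e)) hv, Finset.sum_map]
    refine Finset.sum_congr rfl fun p _ => ?_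
    rw [dif_pos (by simp [hedef]; omega)]
    simp only [hedef, Function.Embedding.coeFn_mk]
    congr 1
    all_goals first
      | exact congrArg (fun z => P i z s) (Fin.ext (by simp))
      | exact congrArg (c j i) (Fin.ext (by simp))
  · intro b _ hb
    simp [if_neg hb]
  · simp

/-- `M_{k,l}(P)ᵀ c = 0` iff `Pᵀ H_{k,l}(c) = 0`, where `c` is ordered block-column-wise as
in `M_{k,l}(P)`. -/
theorem multMat_transpose_eq_zero_iff_mosaicHankel (K L t : ℕ)
    (hK : 1 ≤ K) (hL : 1 ≤ L) (ht : 1 ≤ t)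
    (κ : Fin K → ℕ) (lam : Fin L → ℕ)
    (P : (i : Fin K) → Fin (κ i + 1) → Fin t → ℝ)
    (c : (j : Fin L) → (i : Fin K) → Fin (κ i + lam j + 1) → ℝ) :
    (multMatBlkdiag K L t κ lam P)ᵀ.mulVec (fun r => c r.1 r.2.1 r.2.2) = 0 ↔
      (pMat K t κ P)ᵀ * mosaicHankel K L κ lam c = 0 := by
  have key : ∀ (j : Fin L) (s : Fin t) (q : Fin (lam j + 1)),
      (multMatBlkdiag K L t κ lam P)ᵀ.mulVec (fun r => c r.1 r.2.1 r.2.2) ⟨j, s, q⟩ =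
        ((pMat K t κ P)ᵀ * mosaicHankel K L κ lam c) s ⟨j, q⟩ := by
    intro j s q
    rw [keyAux K L t κ lam P c j s q, Matrix.mul_apply]
    exact Finset.sum_congr rfl fun x _ => rfl
  constructor
  · intro h
    ext s jq
    obtain ⟨j, q⟩ := jq
    rw [← key j s q, h]
    simp
  · intro h
    funext r
    obtain ⟨j, s, q⟩ := r
    rw [key j s q, h]
    simp
end

section
/- Let A ∈ ℝ^{m×n} with m ≥ n and rank A = n, b ∈ ℝ^m, and w ∈ (0,∞)^m. Set v := w^{−1} (entrywise reciprocals) and c := diag(v) b. Then the optimal values of the weighted least-squares and weighted least-norm problems satisfy the duality relation min_{x ∈ ℝ^n} ‖Ax − b‖²_v = ‖b‖²_v − min_{z ∈ ℝ^m, Aᵀz = 0} ‖c − z‖²_w. -/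
/-!
Rescaling coordinates by `√v = √(w⁻¹)` turns `‖·‖_v` into the Euclidean norm. Then the
least-squares value is the squared distance from `c' = diag(√v) b` to `K = diag(√v) (range A)`,
while `z ↦ diag(√w) z` maps `{z | Aᵀ z = 0}` onto `Kᗮ` and, since `diag(√w) c = c'`, turns
`‖c - z‖_w` into the distance from `c'` to `Kᗮ`. Both minima are attained at orthogonal
projections of `c'`, and Pythagoras for the splitting along `Kᗮ` is the duality relation.
-/

open Matrix

section

variable {𝕜 E : Type*} [RCLike 𝕜] [NormedAddCommGroup E] [InnerProductSpace 𝕜 E]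

theorem Submodule.isLeast_image_norm_sub_sq (U : Submodule 𝕜 E) [U.HasOrthogonalProjection]
    (y : E) : IsLeast ((fun x => ‖y - x‖ ^ 2) '' U) (‖Uᗮ.starProjection y‖ ^ 2) := by
  rw [U.starProjection_orthogonal_val]
  refine ⟨⟨_, U.starProjection_apply_mem y, rfl⟩, ?_⟩
  rintro _ ⟨x, hx, rfl⟩
  have hmin : ‖y - U.starProjection y‖ ≤ ‖y - x‖ := by
    rw [U.starProjection_minimal]
    exact ciInf_le ⟨0, by rintro _ ⟨_, rfl⟩; positivity⟩ (⟨x, hx⟩ : U)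
  dsimp only
  gcongr

end

section

variable {ι : Type*}

noncomputable def weightedEmbedding (w : ι → ℝ) : (ι → ℝ) →ₗ[ℝ] EuclideanSpace ℝ ι where
  toFun x := WithLp.toLp 2 fun i => √(w i) * x i
  map_add' x y := by ext i; simp [mul_add]
  map_smul' c x := by ext i; simp [mul_left_comm]

@[simp]
theorem weightedEmbedding_apply (w x : ι → ℝ) (i : ι) : weightedEmbedding w x i = √(w i) * x i :=
  rfl

theorem norm_weightedEmbedding_sq [Fintype ι] {w : ι → ℝ} (hw : ∀ i, 0 ≤ w i) (x : ι → ℝ) :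
    ‖weightedEmbedding w x‖ ^ 2 = ∑ i, w i * x i ^ 2 := by
  simp [EuclideanSpace.norm_sq_eq, mul_pow, Real.sq_sqrt (hw _)]

theorem inner_weightedEmbedding_inv [Fintype ι] {w : ι → ℝ} (hw : ∀ i, 0 < w i) (x z : ι → ℝ) :
    inner ℝ (weightedEmbedding w⁻¹ x) (weightedEmbedding w z) = x ⬝ᵥ z := by
  simp only [PiLp.inner_apply, weightedEmbedding_apply, Pi.inv_apply, Real.sqrt_inv, dotProduct]
  refine Finset.sum_congr rfl fun i _ => ?_
  have hsqrt := (Real.sqrt_pos.2 (hw i)).ne'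
  simp only [RCLike.inner_apply, conj_trivial]
  field_simp

theorem weightedEmbedding_inv_eq {w : ι → ℝ} (hw : ∀ i, 0 < w i) (b : ι → ℝ) :
    weightedEmbedding w⁻¹ b = weightedEmbedding w (w⁻¹ * b) := by
  ext i
  have hsqrt := (Real.sqrt_pos.2 (hw i)).ne'
  simp only [weightedEmbedding_apply, Pi.inv_apply, Pi.mul_apply, Real.sqrt_inv]
  field_simp
  rw [Real.sq_sqrt (hw i).le, mul_div_cancel_left₀ _ (hw i).ne']

theorem weightedEmbedding_surjective {w : ι → ℝ} (hw : ∀ i, 0 < w i) :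
    Function.Surjective (weightedEmbedding w) := fun u =>
  ⟨fun i => u i / √(w i), by ext i; simp [mul_div_cancel₀ _ (Real.sqrt_pos.2 (hw i)).ne']⟩

end

section

variable {ι κ : Type*} [Fintype ι] [Fintype κ] {w : ι → ℝ}

theorem weightedEmbedding_mem_orthogonal_map_range_iff (hw : ∀ i, 0 < w i)
    (A : Matrix ι κ ℝ) (z : ι → ℝ) :
    weightedEmbedding w z ∈ ((LinearMap.range A.mulVecLin).map (weightedEmbedding w⁻¹))ᗮ ↔
      Aᵀ *ᵥ z = 0 := by
  simp only [Submodule.mem_orthogonal, Submodule.mem_map, LinearMap.mem_range, mulVecLin_apply,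
    forall_exists_index, and_imp, forall_apply_eq_imp_iff, inner_weightedEmbedding_inv hw]
  simp_rw [dotProduct_comm _ z, dotProduct_mulVec, ← mulVec_transpose]
  exact dotProduct_eq_zero_iff

theorem leastSquares_eq_image_norm_sub_sq (hw : ∀ i, 0 < w i) (A : Matrix ι κ ℝ) (b : ι → ℝ) :
    {y : ℝ | ∃ x : κ → ℝ, y = ∑ i, (w i)⁻¹ * (A.mulVec x i - b i) ^ 2} =
      (fun k => ‖weightedEmbedding w⁻¹ b - k‖ ^ 2) ''
        (LinearMap.range A.mulVecLin).map (weightedEmbedding w⁻¹) := by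
  have hval (x : κ → ℝ) : ‖weightedEmbedding w⁻¹ b - weightedEmbedding w⁻¹ (A *ᵥ x)‖ ^ 2 =
      ∑ i, (w i)⁻¹ * ((A *ᵥ x) i - b i) ^ 2 := by
    rw [← map_sub, norm_weightedEmbedding_sq (w := w⁻¹) fun i => (inv_pos.2 (hw i)).le]
    simp_rw [Pi.sub_apply, sub_sq_comm, Pi.inv_apply]
  ext y
  simp [hval, eq_comm]

theorem leastNorm_eq_image_norm_sub_sq (hw : ∀ i, 0 < w i) (A : Matrix ι κ ℝ) (b : ι → ℝ) :
    {y : ℝ | ∃ z : ι → ℝ, Aᵀ.mulVec z = 0 ∧ y = ∑ i, w i * ((w i)⁻¹ * b i - z i) ^ 2} =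
      (fun u => ‖weightedEmbedding w⁻¹ b - u‖ ^ 2) ''
        ((LinearMap.range A.mulVecLin).map (weightedEmbedding w⁻¹))ᗮ := by
  have hval (z : ι → ℝ) : ‖weightedEmbedding w⁻¹ b - weightedEmbedding w z‖ ^ 2 =
      ∑ i, w i * ((w i)⁻¹ * b i - z i) ^ 2 := by
    rw [weightedEmbedding_inv_eq hw, ← map_sub, norm_weightedEmbedding_sq fun i => (hw i).le]
    rfl
  ext y
  constructor
  · rintro ⟨z, hz, rfl⟩
    exact ⟨_, (weightedEmbedding_mem_orthogonal_map_range_iff hw A z).2 hz, hval z⟩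
  · rintro ⟨u, hu, rfl⟩
    obtain ⟨z, rfl⟩ := weightedEmbedding_surjective hw u
    exact ⟨z, (weightedEmbedding_mem_orthogonal_map_range_iff hw A z).1 hu, hval z⟩

end

theorem least_squares_least_norm_duality_general (m n : ℕ)
    (A : Matrix (Fin m) (Fin n) ℝ)
    (b : Fin m → ℝ) (w : Fin m → ℝ) (hw : ∀ i, 0 < w i) :
    ∃ m₁ m₂ : ℝ,
      IsLeast {y : ℝ | ∃ x : Fin n → ℝ, y = ∑ i, (w i)⁻¹ * (A.mulVec x i - b i) ^ 2} m₁ ∧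
      IsLeast {y : ℝ | ∃ z : Fin m → ℝ, Aᵀ.mulVec z = 0 ∧
          y = ∑ i, w i * ((w i)⁻¹ * b i - z i) ^ 2} m₂ ∧
      m₁ = (∑ i, (w i)⁻¹ * b i ^ 2) - m₂ := by
  set K := (LinearMap.range A.mulVecLin).map (weightedEmbedding w⁻¹)
  set c' := weightedEmbedding w⁻¹ b
  have hc : ‖c'‖ ^ 2 = ∑ i, (w i)⁻¹ * b i ^ 2 :=
    norm_weightedEmbedding_sq (fun i => (inv_pos.2 (hw i)).le) b
  refine ⟨‖Kᗮ.starProjection c'‖ ^ 2, ‖Kᗮᗮ.starProjection c'‖ ^ 2, ?_, ?_, ?_⟩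
  · rw [leastSquares_eq_image_norm_sub_sq hw]
    exact K.isLeast_image_norm_sub_sq c'
  · rw [leastNorm_eq_image_norm_sub_sq hw]
    exact Kᗮ.isLeast_image_norm_sub_sq c'
  · rw [← hc, Submodule.norm_sq_eq_add_norm_sq_starProjection c' Kᗮ]
    ring

/-- Duality between weighted least squares and weighted least norm: with `v = w⁻¹`
(entrywise) and `c = diag(v) b`, the optimal values satisfy
`min_x ‖Ax - b‖²_v = ‖b‖²_v - min { ‖c - z‖²_w : Aᵀ z = 0 }`;
in particular both minima are attained. -/
theorem least_squares_least_norm_duality (m n : ℕ) (hmn : n ≤ m)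
    (A : Matrix (Fin m) (Fin n) ℝ) (hA : A.rank = n)
    (b : Fin m → ℝ) (w : Fin m → ℝ) (hw : ∀ i, 0 < w i) :
    ∃ m₁ m₂ : ℝ,
      IsLeast {y : ℝ | ∃ x : Fin n → ℝ, y = ∑ i, (w i)⁻¹ * (A.mulVec x i - b i) ^ 2} m₁ ∧
      IsLeast {y : ℝ | ∃ z : Fin m → ℝ, Aᵀ.mulVec z = 0 ∧
          y = ∑ i, w i * ((w i)⁻¹ * b i - z i) ^ 2} m₂ ∧
      m₁ = (∑ i, (w i)⁻¹ * b i ^ 2) - m₂ :=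
  least_squares_least_norm_duality_general m n A b w hw
end

section
/- Let K, t ≥ 1, k = (k_1, …, k_K) with k_i ≥ 1, l ≥ 1, and let P ∈ ℝ^{(k_1+⋯+k_K) × t} be partitioned into row blocks P^(i) ∈ ℝ^{k_i × t} with columns P^(i,j). Let M(P) be the K×t block matrix with (i,j) block M_{l−1}(P^(i,j)) ∈ ℝ^{(k_i+l−1)×l}, and assume M(P) has full column rank tl. Let w ∈ (0,∞)^{Σ_i (k_i+l−1)}, define Γ(P) := M(P)ᵀ diag(w^{−1}) M(P) and, for c = (c^(1), …, c^(K)) with c^(i) ∈ ℝ^{k_i+l−1}, s(P) := M(P)ᵀ c. Then Γ(P) is invertible and the minimum of ‖c − ĉ‖²_w over all ĉ (partitioned as c) satisfying Pᵀ H_{k,l}(ĉ) = 0, where H_{k,l}(ĉ) is the K×1-block mosaic Hankel matrix with i-th block H_{k_i, l}(ĉ^(i)), equals s(P)ᵀ Γ(P)^{−1} s(P). -/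
open Matrix

/-- The `K × t` block matrix `M(P)` whose `(i,j)` block is the multiplication matrix
`M_{l-1}(P^{(i,j)}) ∈ ℝ^{(k_i + l - 1) × l}`, where `k_i = κ i + 1 ≥ 1`, `l = lam + 1 ≥ 1`
and `P ∈ ℝ^{(k_1 + ⋯ + k_K) × t}` is given by its row blocks `P^{(i)} ∈ ℝ^{k_i × t}`. -/
def multMatBlk (K t lam : ℕ) (κ : Fin K → ℕ)
    (P : (i : Fin K) → Fin (κ i + 1) → Fin t → ℝ) :
    Matrix ((i : Fin K) × Fin (κ i + lam + 1)) (Fin t × Fin (lam + 1)) ℝ :=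
  fun r c =>
    if hg : (c.2 : ℕ) ≤ (r.2 : ℕ) ∧ (r.2 : ℕ) - (c.2 : ℕ) ≤ κ r.1
    then P r.1 ⟨(r.2 : ℕ) - (c.2 : ℕ), by omega⟩ c.1 else 0

/-- The `K × 1`-block mosaic Hankel matrix `H_{k,l}(ĉ)` whose `i`-th block is the Hankel
matrix `H_{k_i, l}(ĉ^{(i)})` with `ĉ^{(i)} ∈ ℝ^{k_i + l - 1}`. -/
def mosaicHankelCol (K lam : ℕ) (κ : Fin K → ℕ)
    (chat : (i : Fin K) → Fin (κ i + lam + 1) → ℝ) :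
    Matrix ((i : Fin K) × Fin (κ i + 1)) (Fin (lam + 1)) ℝ :=
  fun r q => chat r.1 ⟨(r.2 : ℕ) + (q : ℕ), by omega⟩

/-- If `M(P)` has full column rank `t·l`, then `Γ(P) = M(P)ᵀ diag(w⁻¹) M(P)` is invertible
and the minimum of `‖c - ĉ‖²_w` over all `ĉ` with `Pᵀ H_{k,l}(ĉ) = 0` equals
`s(P)ᵀ Γ(P)⁻¹ s(P)`, where `s(P) = M(P)ᵀ c`. -/
theorem variable_projection_least_norm (K t lam : ℕ) (hK : 1 ≤ K) (ht : 1 ≤ t)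
    (κ : Fin K → ℕ) (P : (i : Fin K) → Fin (κ i + 1) → Fin t → ℝ)
    (hrank : (multMatBlk K t lam κ P).rank = t * (lam + 1))
    (w : ((i : Fin K) × Fin (κ i + lam + 1)) → ℝ) (hw : ∀ r, 0 < w r)
    (c : (i : Fin K) → Fin (κ i + lam + 1) → ℝ) :
    IsUnit ((multMatBlk K t lam κ P)ᵀ * Matrix.diagonal (fun r => (w r)⁻¹) *
        multMatBlk K t lam κ P) ∧
    (let Γ := (multMatBlk K t lam κ P)ᵀ * Matrix.diagonal (fun r => (w r)⁻¹) *
        multMatBlk K t lam κ P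
    let s := (multMatBlk K t lam κ P)ᵀ.mulVec (fun r => c r.1 r.2)
    IsLeast {y : ℝ | ∃ chat : (i : Fin K) → Fin (κ i + lam + 1) → ℝ,
        (pMat K t κ P)ᵀ * mosaicHankelCol K lam κ chat = 0 ∧
        y = ∑ r : (i : Fin K) × Fin (κ i + lam + 1), w r * (c r.1 r.2 - chat r.1 r.2) ^ 2}
      (s ⬝ᵥ Γ⁻¹.mulVec s)) := by
  classical
  set M : Matrix ((i : Fin K) × Fin (κ i + lam + 1)) (Fin t × Fin (lam + 1)) ℝ :=
    multMatBlk K t lam κ P with hMdef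
  set D : Matrix ((i : Fin K) × Fin (κ i + lam + 1)) ((i : Fin K) × Fin (κ i + lam + 1)) ℝ :=
    Matrix.diagonal (fun r => (w r)⁻¹) with hDdef
  set Γ : Matrix (Fin t × Fin (lam + 1)) (Fin t × Fin (lam + 1)) ℝ := Mᵀ * D * M with hΓdef
  -- entry formula for M
  have hMapp : ∀ (i : Fin K) (r2 : Fin (κ i + lam + 1)) (sp : Fin t) (q : Fin (lam + 1)),
      M ⟨i, r2⟩ (sp, q) =
        if h : (q : ℕ) ≤ (r2 : ℕ) ∧ (r2 : ℕ) - (q : ℕ) ≤ κ i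
        then P i ⟨(r2 : ℕ) - (q : ℕ), by omega⟩ sp else 0 := by
    intro i r2 sp q
    rfl
  -- M has trivial kernel
  have hM0 : ∀ x : Fin t × Fin (lam + 1) → ℝ, M.mulVec x = 0 → x = 0 := by
    intro x hx
    have h1 := M.mulVecLin.finrank_range_add_finrank_ker
    have h2 : Module.finrank ℝ ((Fin t × Fin (lam + 1)) → ℝ) = t * (lam + 1) := by
      simp [Module.finrank_fintype_fun_eq_card]
    rw [h2] at h1
    have h3 : Matrix.rank M = Module.finrank ℝ (LinearMap.range M.mulVecLin) := rfl
    rw [hrank] at *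
    have h4 : Module.finrank ℝ (LinearMap.ker M.mulVecLin) = 0 := by omega
    have h5 : LinearMap.ker M.mulVecLin = ⊥ := Submodule.finrank_eq_zero.mp h4
    have hx' : x ∈ LinearMap.ker M.mulVecLin := by
      simpa [Matrix.mulVecLin_apply] using hx
    rw [h5] at hx'
    simpa using hx'
  -- quadratic form
  have hquad : ∀ x : Fin t × Fin (lam + 1) → ℝ,
      x ⬝ᵥ Γ.mulVec x = ∑ r, (w r)⁻¹ * (M.mulVec x r) ^ 2 := by
    intro x
    rw [hΓdef, ← Matrix.mulVec_mulVec, ← Matrix.mulVec_mulVec,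
      Matrix.dotProduct_mulVec, Matrix.vecMul_transpose]
    simp only [dotProduct]
    refine Finset.sum_congr rfl fun r _ => ?_
    rw [hDdef, Matrix.mulVec_diagonal]
    ring
  -- Γ invertible
  have hΓker : ∀ x : Fin t × Fin (lam + 1) → ℝ, Γ.mulVec x = 0 → x = 0 := by
    intro x hx
    have h0 : x ⬝ᵥ Γ.mulVec x = 0 := by rw [hx]; simp
    rw [hquad] at h0
    have hMx : M.mulVec x = 0 := by
      funext r
      have hnn : ∀ r' ∈ Finset.univ, (0:ℝ) ≤ (w r')⁻¹ * (M.mulVec x r') ^ 2 :=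
        fun r' _ => mul_nonneg (inv_nonneg.mpr (hw r').le) (sq_nonneg _)
      have h6 := (Finset.sum_eq_zero_iff_of_nonneg hnn).mp h0 r (Finset.mem_univ r)
      have hwr : (w r)⁻¹ ≠ 0 := inv_ne_zero (hw r).ne'
      show M.mulVec x r = 0
      rcases mul_eq_zero.mp h6 with h | h
      · exact absurd h hwr
      · exact pow_eq_zero_iff (two_ne_zero) |>.mp h
    exact hM0 x hMx
  have hU : IsUnit Γ := by
    rw [← Matrix.mulVec_injective_iff_isUnit]
    intro x y hxy
    have h7 : Γ.mulVec (x - y) = 0 := by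
      rw [Matrix.mulVec_sub, hxy, sub_self]
    exact sub_eq_zero.mp (hΓker _ h7)
  have hUdet : IsUnit Γ.det := (Matrix.isUnit_iff_isUnit_det Γ).mp hU
  have hΓΓinv : Γ * Γ⁻¹ = 1 := Matrix.mul_nonsing_inv Γ hUdet
  refine ⟨hU, ?_⟩
  -- abbreviations
  set cv : ((i : Fin K) × Fin (κ i + lam + 1)) → ℝ := fun r => c r.1 r.2 with hcv
  set s : Fin t × Fin (lam + 1) → ℝ := Mᵀ.mulVec cv with hs
  set u : Fin t × Fin (lam + 1) → ℝ := Γ⁻¹.mulVec s with hu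
  have hΓu : Γ.mulVec u = s := by
    rw [hu, Matrix.mulVec_mulVec, hΓΓinv, Matrix.one_mulVec]
  set d : ((i : Fin K) × Fin (κ i + lam + 1)) → ℝ := fun r => (w r)⁻¹ * M.mulVec u r with hd
  have hdD : d = D.mulVec (M.mulVec u) := by
    funext r; rw [hDdef, Matrix.mulVec_diagonal]
  have hMTd : Mᵀ.mulVec d = s := by
    rw [hdD, Matrix.mulVec_mulVec, Matrix.mulVec_mulVec, ← hΓdef, hΓu]
  -- constraint characterization
  have hsig : ∀ (v : (i : Fin K) → Fin (κ i + lam + 1) → ℝ) (sp : Fin t) (q : Fin (lam + 1)),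
      Mᵀ.mulVec (fun r => v r.1 r.2) (sp, q) =
        ∑ i : Fin K, ∑ r2 : Fin (κ i + lam + 1), M ⟨i, r2⟩ (sp, q) * v i r2 := by
    intro v sp q
    simp only [Matrix.mulVec, dotProduct, Matrix.transpose_apply]
    rw [← Finset.univ_sigma_univ, Finset.sum_sigma]
  have key : ∀ (v : (i : Fin K) → Fin (κ i + lam + 1) → ℝ) (sp : Fin t) (q : Fin (lam + 1))
      (i : Fin K), ∑ r2 : Fin (κ i + lam + 1), M ⟨i, r2⟩ (sp, q) * v i r2 =
        ∑ j : Fin (κ i + 1), P i j sp * v i ⟨(j : ℕ) + (q : ℕ), by omega⟩ := by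
    intro v sp q i
    have hMrow : ∀ r2 : Fin (κ i + lam + 1), M ⟨i, r2⟩ (sp, q) =
        ∑ j : Fin (κ i + 1), if (r2 : ℕ) = (j : ℕ) + (q : ℕ) then P i j sp else 0 := by
      intro r2
      rw [hMapp]
      by_cases hcond : (q : ℕ) ≤ (r2 : ℕ) ∧ (r2 : ℕ) - (q : ℕ) ≤ κ i
      · rw [dif_pos hcond]
        have hiff : ∀ j : Fin (κ i + 1), ((r2 : ℕ) = (j : ℕ) + (q : ℕ)) ↔
            j = ⟨(r2 : ℕ) - (q : ℕ), by omega⟩ := by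
          intro j
          rw [Fin.ext_iff]
          simp only [Fin.val_mk]
          omega
        rw [Finset.sum_congr rfl fun j _ => if_congr (hiff j) rfl rfl,
          Finset.sum_ite_eq' Finset.univ _ (fun j => P i j sp)]
        simp
      · rw [dif_neg hcond]
        refine (Finset.sum_eq_zero fun j _ => if_neg fun h => hcond ⟨by omega, by omega⟩).symm
    calc ∑ r2 : Fin (κ i + lam + 1), M ⟨i, r2⟩ (sp, q) * v i r2
        = ∑ r2 : Fin (κ i + lam + 1), ∑ j : Fin (κ i + 1),
            (if (r2 : ℕ) = (j : ℕ) + (q : ℕ) then P i j sp * v i r2 else 0) := by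
          refine Finset.sum_congr rfl fun r2 _ => ?_
          rw [hMrow r2, Finset.sum_mul]
          exact Finset.sum_congr rfl fun j _ => by rw [ite_mul, zero_mul]
      _ = ∑ j : Fin (κ i + 1), ∑ r2 : Fin (κ i + lam + 1),
            (if (r2 : ℕ) = (j : ℕ) + (q : ℕ) then P i j sp * v i r2 else 0) :=
          Finset.sum_comm
      _ = ∑ j : Fin (κ i + 1), P i j sp * v i ⟨(j : ℕ) + (q : ℕ), by omega⟩ := by
          refine Finset.sum_congr rfl fun j _ => ?_
          have hiff : ∀ r2 : Fin (κ i + lam + 1), ((r2 : ℕ) = (j : ℕ) + (q : ℕ)) ↔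
              r2 = ⟨(j : ℕ) + (q : ℕ), by omega⟩ := by
            intro r2
            rw [Fin.ext_iff]
          rw [Finset.sum_congr rfl fun r2 _ => if_congr (hiff r2) rfl rfl,
            Finset.sum_ite_eq' Finset.univ _ (fun r2 => P i j sp * v i r2)]
          simp
  have hPH : ∀ (v : (i : Fin K) → Fin (κ i + lam + 1) → ℝ) (sp : Fin t) (q : Fin (lam + 1)),
      ((pMat K t κ P)ᵀ * mosaicHankelCol K lam κ v) sp q =
        ∑ i : Fin K, ∑ j : Fin (κ i + 1), P i j sp * v i ⟨(j : ℕ) + (q : ℕ), by omega⟩ := by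
    intro v sp q
    rw [Matrix.mul_apply, ← Finset.univ_sigma_univ, Finset.sum_sigma]
    refine Finset.sum_congr rfl fun i _ => Finset.sum_congr rfl fun j _ => ?_
    simp [pMat, mosaicHankelCol, Matrix.transpose_apply]
  have hconstr : ∀ v : (i : Fin K) → Fin (κ i + lam + 1) → ℝ,
      (pMat K t κ P)ᵀ * mosaicHankelCol K lam κ v = 0 ↔
        Mᵀ.mulVec (fun r => v r.1 r.2) = 0 := by
    intro v
    constructor
    · intro h
      funext r
      obtain ⟨sp, q⟩ := r
      have := congrFun (congrFun h sp) q
      rw [hPH v sp q] at this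
      rw [hsig v sp q]
      show _ = (0 : ℝ)
      rw [Finset.sum_congr rfl fun i _ => key v sp q i]
      simpa using this
    · intro h
      ext sp q
      have := congrFun h (sp, q)
      rw [hsig v sp q, Finset.sum_congr rfl fun i _ => key v sp q i] at this
      rw [hPH v sp q]
      simpa using this
  -- the optimal value
  have hval : ∑ r, w r * d r ^ 2 = s ⬝ᵥ Γ⁻¹.mulVec s := by
    have h1 : ∑ r, w r * d r ^ 2 = ∑ r, (w r)⁻¹ * (M.mulVec u r) ^ 2 := by
      refine Finset.sum_congr rfl fun r _ => ?_
      rw [hd]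
      have := (hw r).ne'
      field_simp
    rw [h1, ← hquad u, hΓu, hu, dotProduct_comm]
  -- cross terms vanish
  have hcross : ∀ e : ((i : Fin K) × Fin (κ i + lam + 1)) → ℝ, Mᵀ.mulVec e = 0 →
      ∑ r, w r * (e r * d r) = 0 := by
    intro e he
    have h1 : ∑ r, w r * (e r * d r) = ∑ r, e r * M.mulVec u r := by
      refine Finset.sum_congr rfl fun r _ => ?_
      rw [hd]
      have := (hw r).ne'
      field_simp
    rw [h1]
    have h2 : e ⬝ᵥ M.mulVec u = Mᵀ.mulVec e ⬝ᵥ u := by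
      rw [Matrix.dotProduct_mulVec, ← Matrix.mulVec_transpose]
    have h3 : e ⬝ᵥ M.mulVec u = 0 := by rw [h2, he]; simp
    simpa [dotProduct] using h3
  constructor
  · -- membership: optimal point is c - d
    refine ⟨fun i r2 => c i r2 - d ⟨i, r2⟩, ?_, ?_⟩
    · rw [hconstr]
      have h8 : (fun r : (i : Fin K) × Fin (κ i + lam + 1) =>
          c r.1 r.2 - d ⟨r.1, r.2⟩) = cv - d := by
        funext r; obtain ⟨i, r2⟩ := r; rfl
      rw [h8, Matrix.mulVec_sub, ← hs, hMTd, sub_self]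
    · rw [← hval]
      refine Finset.sum_congr rfl fun r _ => ?_
      congr 1
      obtain ⟨i, r2⟩ := r
      ring
  · -- lower bound
    rintro y ⟨chat, hchat, rfl⟩
    rw [hconstr] at hchat
    set e : ((i : Fin K) × Fin (κ i + lam + 1)) → ℝ :=
      fun r => cv r - chat r.1 r.2 - d r with he
    have hMTe : Mᵀ.mulVec e = 0 := by
      have h9 : e = cv - (fun r => chat r.1 r.2) - d := by funext r; rfl
      rw [h9, Matrix.mulVec_sub, Matrix.mulVec_sub, ← hs, hchat, hMTd]
      simp
    have hsplit : ∀ r : ((i : Fin K) × Fin (κ i + lam + 1)),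
        w r * (c r.1 r.2 - chat r.1 r.2) ^ 2 =
        w r * e r ^ 2 + 2 * (w r * (e r * d r)) + w r * d r ^ 2 := by
      intro r
      have h10 : c r.1 r.2 - chat r.1 r.2 = e r + d r := by
        rw [he, hcv]; obtain ⟨i, r2⟩ := r; ring
      rw [h10]; ring
    calc s ⬝ᵥ Γ⁻¹.mulVec s = ∑ r, w r * d r ^ 2 := hval.symm
      _ ≤ ∑ r, w r * e r ^ 2 + ∑ r, w r * d r ^ 2 := by
          have : (0:ℝ) ≤ ∑ r, w r * e r ^ 2 :=
            Finset.sum_nonneg fun r _ => mul_nonneg (hw r).le (sq_nonneg _)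
          linarith
      _ = ∑ r, (w r * e r ^ 2 + 2 * (w r * (e r * d r)) + w r * d r ^ 2) := by
          rw [Finset.sum_add_distrib, Finset.sum_add_distrib, ← Finset.mul_sum, hcross e hMTe]
          ring
      _ = ∑ r, w r * (c r.1 r.2 - chat r.1 r.2) ^ 2 :=
          Finset.sum_congr rfl fun r _ => (hsplit r).symm
end

section
/- Let p be a nonzero vector in a finite-dimensional real inner product space, let W be a linear subspace, and let Πp denote the orthogonal projection of p onto W. For nonzero vectors x, y define sin²∠(x,y) := 1 − ⟨x,y⟩²/(‖x‖²‖y‖²). Then for every nonzero w ∈ W, sin²∠(p, w) ≥ ‖p − Πp‖²/‖p‖²; moreover, if Πp ≠ 0 then equality holds for w = Πp, so the infimum of sin²∠(p,w) over nonzero w ∈ W equals ‖p − Πp‖²/‖p‖² (the minimal relative squared Euclidean approximation error of p by elements of W). -/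
/-!
For `w ∈ W` we have `⟪p, w⟫ = ⟪Πp, w⟫` because `p - Πp ⟂ W`, so Cauchy–Schwarz bounds
`⟪p, w⟫²/(‖p‖²‖w‖²)` by `‖Πp‖²/‖p‖²`, with equality at `w = Πp`. By Pythagoras,
`1 - ‖Πp‖²/‖p‖² = ‖p - Πp‖²/‖p‖²`.
-/

open RealInnerProductSpace

noncomputable def sinSqAngle {V : Type*} [NormedAddCommGroup V] [InnerProductSpace ℝ V]
    (x y : V) : ℝ :=
  1 - ⟪x, y⟫ ^ 2 / (‖x‖ ^ 2 * ‖y‖ ^ 2)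

namespace Submodule

variable {V : Type*} [NormedAddCommGroup V] [InnerProductSpace ℝ V]
  (K : Submodule ℝ V) [K.HasOrthogonalProjection]

theorem real_inner_starProjection_left_of_mem (p : V) {w : V} (hw : w ∈ K) :
    ⟪K.starProjection p, w⟫ = ⟪p, w⟫ := by
  rw [inner_starProjection_left_eq_right, starProjection_eq_self_iff.mpr hw]

theorem real_inner_starProjection_right_self (p : V) :
    ⟪p, K.starProjection p⟫ = ‖K.starProjection p‖ ^ 2 := by
  rw [← K.real_inner_starProjection_left_of_mem p (K.starProjection_apply_mem p),
    real_inner_self_eq_norm_sq]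

theorem real_inner_sq_le_norm_starProjection_sq_mul (p : V) {w : V} (hw : w ∈ K) :
    ⟪p, w⟫ ^ 2 ≤ ‖K.starProjection p‖ ^ 2 * ‖w‖ ^ 2 := by
  rw [← K.real_inner_starProjection_left_of_mem p hw, ← mul_pow, ← sq_abs]
  gcongr
  exact abs_real_inner_le_norm _ _

theorem norm_sub_starProjection_sq (p : V) :
    ‖p - K.starProjection p‖ ^ 2 = ‖p‖ ^ 2 - ‖K.starProjection p‖ ^ 2 := by
  rw [K.norm_sq_eq_add_norm_sq_starProjection p, starProjection_orthogonal_val]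
  ring

variable {K} {p : V}

theorem one_sub_norm_starProjection_sq_div (hp : p ≠ 0) :
    1 - ‖K.starProjection p‖ ^ 2 / ‖p‖ ^ 2 = ‖p - K.starProjection p‖ ^ 2 / ‖p‖ ^ 2 := by
  rw [norm_sub_starProjection_sq, sub_div, div_self (pow_ne_zero 2 (norm_ne_zero_iff.mpr hp))]

theorem norm_sub_starProjection_sq_div_le_sinSqAngle (hp : p ≠ 0) {w : V} (hw : w ∈ K) :
    ‖p - K.starProjection p‖ ^ 2 / ‖p‖ ^ 2 ≤ sinSqAngle p w := by
  rw [← one_sub_norm_starProjection_sq_div hp, sinSqAngle, mul_comm, ← div_div]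
  gcongr
  exact div_le_of_le_mul₀ (by positivity) (by positivity)
    (K.real_inner_sq_le_norm_starProjection_sq_mul p hw)

theorem sinSqAngle_starProjection (hp : p ≠ 0) (hKp : K.starProjection p ≠ 0) :
    sinSqAngle p (K.starProjection p) = ‖p - K.starProjection p‖ ^ 2 / ‖p‖ ^ 2 := by
  have hKp' : ‖K.starProjection p‖ ≠ 0 := norm_ne_zero_iff.mpr hKp
  rw [sinSqAngle, real_inner_starProjection_right_self, ← one_sub_norm_starProjection_sq_div hp]
  field_simp

end Submodule

/-- Let `p ≠ 0` in a finite-dimensional real inner product space, `W` a subspace and `Πp`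
the orthogonal projection of `p` onto `W`.  With `sin²∠(x,y) = 1 - ⟨x,y⟩²/(‖x‖²‖y‖²)`:
every nonzero `w ∈ W` satisfies `sin²∠(p,w) ≥ ‖p - Πp‖²/‖p‖²`; if `Πp ≠ 0` then equality
holds at `w = Πp`, and hence the infimum of `sin²∠(p,w)` over nonzero `w ∈ W` equals
`‖p - Πp‖²/‖p‖²` (and is attained). -/
theorem sin_sq_angle_ge_relative_error {V : Type*} [NormedAddCommGroup V]
    [InnerProductSpace ℝ V] [FiniteDimensional ℝ V]
    (W : Submodule ℝ V) (p : V) (hp : p ≠ 0) :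
    (∀ w ∈ W, w ≠ 0 →
      ‖p - (Submodule.orthogonalProjectionOnto W p : V)‖ ^ 2 / ‖p‖ ^ 2 ≤
        1 - (inner ℝ p w : ℝ) ^ 2 / (‖p‖ ^ 2 * ‖w‖ ^ 2)) ∧
    ((Submodule.orthogonalProjectionOnto W p : V) ≠ 0 →
      1 - (inner ℝ p ((Submodule.orthogonalProjectionOnto W p : V)) : ℝ) ^ 2 /
          (‖p‖ ^ 2 * ‖(Submodule.orthogonalProjectionOnto W p : V)‖ ^ 2) =
        ‖p - (Submodule.orthogonalProjectionOnto W p : V)‖ ^ 2 / ‖p‖ ^ 2) ∧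
    ((Submodule.orthogonalProjectionOnto W p : V) ≠ 0 →
      IsLeast {s : ℝ | ∃ w ∈ W, w ≠ 0 ∧ s = 1 - (inner ℝ p w : ℝ) ^ 2 / (‖p‖ ^ 2 * ‖w‖ ^ 2)}
        (‖p - (Submodule.orthogonalProjectionOnto W p : V)‖ ^ 2 / ‖p‖ ^ 2)) := by
  have lower_bound (w : V) (hw : w ∈ W) :
      ‖p - W.starProjection p‖ ^ 2 / ‖p‖ ^ 2 ≤ sinSqAngle p w :=
    Submodule.norm_sub_starProjection_sq_div_le_sinSqAngle hp hw
  refine ⟨fun w hw _ ↦ lower_bound w hw, Submodule.sinSqAngle_starProjection hp,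
    fun hWp ↦ ⟨⟨_, W.starProjection_apply_mem p, hWp,
      (Submodule.sinSqAngle_starProjection hp hWp).symm⟩, ?_⟩⟩
  rintro s ⟨w, hw, -, rfl⟩
  exact lower_bound w hw
end

section
/- For all vectors u^(1), u^(2), u^(3) ∈ ℝ² (coefficient vectors of polynomials of degree at most 1), the 8×9 block matrix G = [ −M_2(u^(2)), M_2(u^(1)), 0 ; −M_2(u^(3)), 0, M_2(u^(1)) ], where each M_2(u^(k)) ∈ ℝ^{4×3} is a multiplication matrix, satisfies det(G Gᵀ) = 0; equivalently, rank G ≤ 7, so G never has full row rank. -/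
open Matrix

/-- The multiplication matrix `M_2(u) ∈ ℝ^{4×3}` of `u ∈ ℝ²` (`d = 1`, `m = 2`), with
entries `u_{i-j}` (zero out of range). -/
def multMat2 (u : Fin 2 → ℝ) : Matrix (Fin 4) (Fin 3) ℝ :=
  fun i j =>
    if hg : (j : ℕ) ≤ (i : ℕ) ∧ (i : ℕ) - (j : ℕ) ≤ 1
    then u ⟨(i : ℕ) - (j : ℕ), by omega⟩ else 0

/-- The `8 × 9` block matrix `G = [ -M_2(u²), M_2(u¹), 0 ; -M_2(u³), 0, M_2(u¹) ]`. -/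
def Gmat (u1 u2 u3 : Fin 2 → ℝ) : Matrix (Fin 2 × Fin 4) (Fin 3 × Fin 3) ℝ :=
  fun r c =>
    if c.1 = 0 then (if r.1 = 0 then -(multMat2 u2 r.2 c.2) else -(multMat2 u3 r.2 c.2))
    else if c.1 = 1 then (if r.1 = 0 then multMat2 u1 r.2 c.2 else 0)
    else (if r.1 = 1 then multMat2 u1 r.2 c.2 else 0)

/-- Generic left-kernel vector of `G`: `(α·w, β·w)` where `w = (b³, -ab², a²b, -a³)` is a
left-kernel vector of `M_2(u¹)` (`u¹ = (a,b)`), provided `α,β` satisfy the compatibility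
relation `α(u²₀b - a u²₁) + β(u³₀b - a u³₁) = 0`. -/
lemma genKer (u1 u2 u3 : Fin 2 → ℝ) (α β : ℝ)
    (h : α*(u2 0 * u1 1 - u1 0 * u2 1) + β*(u3 0 * u1 1 - u1 0 * u3 1) = 0) :
    (Gmat u1 u2 u3)ᵀ *ᵥ (fun r => (if r.1 = 0 then α else β) *
      ![u1 1^3, -(u1 0)*(u1 1)^2, (u1 0)^2*(u1 1), -(u1 0)^3] r.2) = 0 := by
  funext c
  obtain ⟨c1, c2⟩ := c
  fin_cases c1 <;> fin_cases c2 <;>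
    simp [Gmat, multMat2, mulVec, dotProduct, transpose, Fintype.sum_prod_type,
      Fin.sum_univ_succ]
  · linear_combination (-(u1 1)^2) * h
  · linear_combination (u1 0 * u1 1) * h
  · linear_combination (-(u1 0)^2) * h
  all_goals ring

/-- If `u¹ = 0`, then `(w(u²), 0)` is a left-kernel vector of `G`. -/
lemma zeroKer (u2 u3 : Fin 2 → ℝ) :
    (Gmat 0 u2 u3)ᵀ *ᵥ (fun r => (if r.1 = 0 then (1:ℝ) else 0) *
      ![u2 1^3, -(u2 0)*(u2 1)^2, (u2 0)^2*(u2 1), -(u2 0)^3] r.2) = 0 := by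
  funext c
  obtain ⟨c1, c2⟩ := c
  fin_cases c1 <;> fin_cases c2 <;>
    simp [Gmat, multMat2, mulVec, dotProduct, transpose, Fintype.sum_prod_type,
      Fin.sum_univ_succ] <;> ring

/-- If `u¹ = u² = 0`, any vector supported on the first row block is a left-kernel vector. -/
lemma zzKer (u3 : Fin 2 → ℝ) :
    (Gmat 0 0 u3)ᵀ *ᵥ (fun r => if r = (0,0) then (1:ℝ) else 0) = 0 := by
  funext c
  obtain ⟨c1, c2⟩ := c
  fin_cases c1 <;> fin_cases c2 <;>
    simp [Gmat, multMat2, mulVec, dotProduct, transpose, Fintype.sum_prod_type,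
      Fin.sum_univ_succ, Prod.ext_iff]

lemma nonzero_cases {u : Fin 2 → ℝ} (h : u ≠ 0) : u 0 ≠ 0 ∨ u 1 ≠ 0 := by
  by_contra hc
  push_neg at hc
  exact h (funext fun i => by fin_cases i <;> simp [hc.1, hc.2])

/-- `G` always has a nonzero left-kernel vector. -/
lemma keyKer (u1 u2 u3 : Fin 2 → ℝ) :
    ∃ v : Fin 2 × Fin 4 → ℝ, v ≠ 0 ∧ (Gmat u1 u2 u3)ᵀ *ᵥ v = 0 := by
  by_cases h1 : u1 = 0
  · subst h1
    by_cases h2 : u2 = 0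
    · subst h2
      exact ⟨_, by intro hv; simpa using congrFun hv (0,0), zzKer u3⟩
    · refine ⟨_, ?_, zeroKer u2 u3⟩
      intro hv
      rcases nonzero_cases h2 with hi | hi
      · have := congrFun hv (0, 3)
        simp at this
        exact hi this
      · have := congrFun hv (0, 0)
        simp at this
        exact hi this
  · by_cases hb : u2 0 * u1 1 - u1 0 * u2 1 = 0
    · refine ⟨_, ?_, genKer u1 u2 u3 1 0 (by rw [hb]; ring)⟩
      intro hv
      rcases nonzero_cases h1 with hi | hi
      · have := congrFun hv (0, 3)
        simp at this
        exact hi this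
      · have := congrFun hv (0, 0)
        simp at this
        exact hi this
    · refine ⟨_, ?_, genKer u1 u2 u3 (u3 0 * u1 1 - u1 0 * u3 1)
        (-(u2 0 * u1 1 - u1 0 * u2 1)) (by ring)⟩
      intro hv
      rcases nonzero_cases h1 with hi | hi
      · have := congrFun hv (1, 3)
        simp at this
        rcases this with h | h
        · exact hb (by linarith)
        · exact hi h
      · have := congrFun hv (1, 0)
        simp at this
        rcases this with h | h
        · exact hb (by linarith)
        · exact hi h

/-- For all `u¹, u², u³ ∈ ℝ²`, the matrix `G` satisfies `det (G Gᵀ) = 0`; equivalently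
`rank G ≤ 7`, so `G` never has full row rank. -/
theorem det_G_mul_G_transpose_eq_zero (u1 u2 u3 : Fin 2 → ℝ) :
    (Gmat u1 u2 u3 * (Gmat u1 u2 u3)ᵀ).det = 0 ∧ (Gmat u1 u2 u3).rank ≤ 7 := by
  obtain ⟨v, hv, hker⟩ := keyKer u1 u2 u3
  constructor
  · refine (Matrix.exists_mulVec_eq_zero_iff).mp ⟨v, hv, ?_⟩
    rw [← Matrix.mulVec_mulVec, hker, Matrix.mulVec_zero]
  · rw [← Matrix.rank_transpose]
    have h8 : (Gmat u1 u2 u3)ᵀ.rank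
        + Module.finrank ℝ (LinearMap.ker (Gmat u1 u2 u3)ᵀ.mulVecLin) = 8 := by
      have := LinearMap.finrank_range_add_finrank_ker ((Gmat u1 u2 u3)ᵀ.mulVecLin)
      simpa [Matrix.rank] using this
    have hk : Module.finrank ℝ (LinearMap.ker (Gmat u1 u2 u3)ᵀ.mulVecLin) ≠ 0 := by
      rw [Ne, Submodule.finrank_eq_zero]
      exact (Submodule.ne_bot_iff _).mpr
        ⟨v, LinearMap.mem_ker.mpr (by rw [Matrix.mulVecLin_apply]; exact hker), hv⟩
    omega
end

section
/- Let 𝔽 ∈ {ℝ, ℂ}, p^(1) ∈ 𝔽^{n_1+1}, p^(2) ∈ 𝔽^{n_2+1}, 0 ≤ d ≤ min(n_1, n_2), ℓ_1 = n_1 − d, ℓ_2 = n_2 − d, and K_b = n_2 + ℓ_1 + 1. Let S = [ M_{ℓ_1}(p^(2)), −M_{ℓ_2}(p^(1)) ] ∈ 𝔽^{K_b × (ℓ_1+ℓ_2+2)} be the Sylvester subresultant matrix. Then Sᵀ = J_{ℓ_1+ℓ_2+2} · H, where H ∈ 𝔽^{(ℓ_1+ℓ_2+2) × K_b} is the mosaic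 Hankel matrix obtained by stacking H_{ℓ_2+1, K_b}(q^(1)) on top of H_{ℓ_1+1, K_b}(q^(2)), with q^(1) = (0_{ℓ_2}, −p^(1), 0_{ℓ_2}) ∈ 𝔽^{2ℓ_2+n_1+1} and q^(2) = (0_{ℓ_1}, p^(2), 0_{ℓ_1}) ∈ 𝔽^{2ℓ_1+n_2+1}, and J_n is the n×n reversal (anti-identity) matrix. -/
open Matrix

/-- The Sylvester subresultant matrix `S = [ M_{ℓ₁}(p²), -M_{ℓ₂}(p¹) ]` of size
`K_b × (ℓ₁ + ℓ₂ + 2)` with `ℓ₁ = n₁ - d`, `ℓ₂ = n₂ - d`, `K_b = n₂ + ℓ₁ + 1`, with the two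
column blocks flattened: columns `0, …, ℓ₁` carry `M_{ℓ₁}(p²)` (entries `p²_{i-c}`) and
columns `ℓ₁+1, …, ℓ₁+ℓ₂+1` carry `-M_{ℓ₂}(p¹)` (entries `-p¹_{i-(c-ℓ₁-1)}`). -/
def sylvSub {F : Type*} [Field F] (n1 n2 d : ℕ)
    (p1 : Fin (n1 + 1) → F) (p2 : Fin (n2 + 1) → F) :
    Matrix (Fin (n2 + (n1 - d) + 1)) (Fin ((n1 - d) + (n2 - d) + 2)) F :=
  fun i c =>
    if (c : ℕ) ≤ n1 - d then
      (if hg : (c : ℕ) ≤ (i : ℕ) ∧ (i : ℕ) - (c : ℕ) ≤ n2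
       then p2 ⟨(i : ℕ) - (c : ℕ), by omega⟩ else 0)
    else
      (if hg : (c : ℕ) - (n1 - d + 1) ≤ (i : ℕ) ∧ (i : ℕ) - ((c : ℕ) - (n1 - d + 1)) ≤ n1
       then -(p1 ⟨(i : ℕ) - ((c : ℕ) - (n1 - d + 1)), by omega⟩) else 0)

/-- The reversal (anti-identity) matrix `J_n`. -/
def revMat (F : Type*) [Field F] (n : ℕ) : Matrix (Fin n) (Fin n) F :=
  fun i j => if (i : ℕ) + (j : ℕ) = n - 1 then 1 else 0

/-- The vector `p ∈ 𝔽^{n+1}` padded with `m` zeros before and after. -/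
def padVec {F : Type*} [Field F] (n m : ℕ) (p : Fin (n + 1) → F) :
    Fin (2 * m + n + 1) → F :=
  fun q =>
    if hq : m ≤ (q : ℕ) ∧ (q : ℕ) ≤ m + n then p ⟨(q : ℕ) - m, by omega⟩ else 0

/-- The mosaic Hankel matrix obtained by stacking `H_{ℓ₂+1, K_b}(q¹)` on top of
`H_{ℓ₁+1, K_b}(q²)`, where `q¹ ∈ 𝔽^{2ℓ₂+n₁+1}` and `q² ∈ 𝔽^{2ℓ₁+n₂+1}`. -/
def hankelStack {F : Type*} [Field F] (n1 n2 d : ℕ) (hd1 : d ≤ n1) (hd2 : d ≤ n2)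
    (q1 : Fin (2 * (n2 - d) + n1 + 1) → F) (q2 : Fin (2 * (n1 - d) + n2 + 1) → F) :
    Matrix (Fin ((n1 - d) + (n2 - d) + 2)) (Fin (n2 + (n1 - d) + 1)) F :=
  fun r c =>
    if hr : (r : ℕ) ≤ n2 - d then q1 ⟨(r : ℕ) + (c : ℕ), by omega⟩
    else q2 ⟨((r : ℕ) - (n2 - d + 1)) + (c : ℕ), by omega⟩


lemma revMat_mul_apply {F : Type*} [Field F] {n m : ℕ} (A : Matrix (Fin n) (Fin m) F)
    (c : Fin n) (i : Fin m) :
    (revMat F n * A) c i = A ⟨n - 1 - (c : ℕ), by omega⟩ i := by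
  rw [Matrix.mul_apply, Finset.sum_eq_single (⟨n - 1 - (c : ℕ), by omega⟩ : Fin n)]
  · have h : (c : ℕ) + (n - 1 - (c : ℕ)) = n - 1 := by omega
    simp [revMat, h]
  · intro b _ hb
    have : (c : ℕ) + (b : ℕ) ≠ n - 1 := by
      intro h; apply hb; apply Fin.ext; simp; omega
    simp [revMat, this]
  · intro h; exact absurd (Finset.mem_univ _) h

/-- `Sᵀ = J_{ℓ₁+ℓ₂+2} · H`, where `S = [ M_{ℓ₁}(p²), -M_{ℓ₂}(p¹) ]` and `H` stacks
`H_{ℓ₂+1, K_b}(q¹)` on top of `H_{ℓ₁+1, K_b}(q²)` with `q¹ = (0_{ℓ₂}, -p¹, 0_{ℓ₂})` and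
`q² = (0_{ℓ₁}, p², 0_{ℓ₁})`. -/
theorem sylvSub_transpose_eq_revMat_mul_hankelStack {F : Type*} [RCLike F]
    (n1 n2 d : ℕ) (hd1 : d ≤ n1) (hd2 : d ≤ n2)
    (p1 : Fin (n1 + 1) → F) (p2 : Fin (n2 + 1) → F) :
    (sylvSub n1 n2 d p1 p2)ᵀ =
      revMat F ((n1 - d) + (n2 - d) + 2) *
        hankelStack n1 n2 d hd1 hd2
          (fun q => -(padVec n1 (n2 - d) p1 q)) (padVec n2 (n1 - d) p2) := by
  
  funext c i
  rw [Matrix.transpose_apply, revMat_mul_apply]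
  simp only [sylvSub, hankelStack, padVec]
  split_ifs <;>
    first
      | rfl
      | (exfalso; omega)
      | simp
      | skip
  · congr 1
    simp only [Fin.mk.injEq]
    omega
  · congr 1 <;> (try simp only [Fin.mk.injEq]) <;> omega
end
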